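/- There exist matrices P, Q ∈ ℝ^{n×k} such that (i) Pᵀ·P = I_k, (ii) X·Yᵀ·P = X·Xᵀ·Q, and (iii) P·Qᵀ is a minimiser of the rank-constrained problem: ‖Y − P·Qᵀ·X‖_F ≤ ‖Y − A·X‖_F for every A ∈ ℝ^{n×n} with rank(A) ≤ k (Lemma B.1 of the paper). -/

import Mathlib

/-! A product `A * X` with `rank A ≤ k` can be written `P * ((Pᵀ * A) * X)` with `Pᵀ * P = 1`, so it
suffices to minimise `‖Y - P * (W * X)‖` over such `P` and all `W`. A minimiser exists: `P` ranges
over the compact Stiefel set, and `W * X` over a closed subspace, where only a ball of radius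
`2 * ‖Y‖` matters. Perturbing `W` by `t • H` at a minimiser gives `tr (X (Y - P W X)ᵀ P H) = 0` for
all `H`, hence `X (Y - P W X)ᵀ P = 0`, which is the normal equation with `Q = Wᵀ`. -/

open Matrix

/-- The Frobenius norm of a real matrix. -/
noncomputable def frobNorm {p q : ℕ} (A : Matrix (Fin p) (Fin q) ℝ) : ℝ :=
  Real.sqrt (∑ i, ∑ j, (A i j) ^ 2)

open Module

attribute [local instance] Matrix.frobeniusNormedAddCommGroup Matrix.frobeniusNormedSpace

theorem Submodule.exists_le_finrank_eq {K V : Type*} [DivisionRing K] [AddCommGroup V]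
    [Module K V] [FiniteDimensional K V] (U : Submodule K V) {k : ℕ} (hUk : finrank K U ≤ k)
    (hk : k ≤ finrank K V) : ∃ W : Submodule K V, U ≤ W ∧ finrank K W = k := by
  obtain ⟨d, rfl⟩ := Nat.exists_eq_add_of_le hUk
  induction d generalizing U with
  | zero => exact ⟨U, le_rfl, rfl⟩
  | succ d ih =>
    obtain ⟨v, hv⟩ : ∃ v, v ∉ U := SetLike.exists_not_mem_of_ne_top U fun hU => by
      rw [hU, finrank_top] at hk; omega
    obtain ⟨W, hW, hWd⟩ := ih (U ⊔ K ∙ v) (by rw [finrank_sup_span_singleton hv]; omega)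
      (by rw [finrank_sup_span_singleton hv]; omega)
    exact ⟨W, le_sup_left.trans hW, by rw [hWd, finrank_sup_span_singleton hv]; omega⟩

theorem Submodule.exists_orthonormal_sum_inner_smul_eq {𝕜 E κ : Type*} [RCLike 𝕜]
    [NormedAddCommGroup E] [InnerProductSpace 𝕜 E] [FiniteDimensional 𝕜 E] [Fintype κ]
    (V : Submodule 𝕜 E) (hV : finrank 𝕜 V ≤ Fintype.card κ)
    (hκ : Fintype.card κ ≤ finrank 𝕜 E) :
    ∃ v : κ → E, Orthonormal 𝕜 v ∧ ∀ x ∈ V, ∑ j, inner 𝕜 (v j) x • v j = x := by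
  obtain ⟨W, hVW, hW⟩ := V.exists_le_finrank_eq hV hκ
  let b : OrthonormalBasis κ 𝕜 W :=
    (stdOrthonormalBasis 𝕜 W).reindex (Fintype.equivFinOfCardEq hW.symm).symm
  refine ⟨fun j => b j, b.orthonormal.comp_linearIsometry W.subtypeₗᵢ, fun x hx => ?_⟩
  simpa using congrArg W.subtype (b.sum_repr' ⟨x, hVW hx⟩)

theorem exists_orthonormal_cols_of_rank_le {ι κ μ : Type*} [Fintype ι] [Fintype κ] [DecidableEq κ]
    [Fintype μ] (B : Matrix ι μ ℝ) (hB : B.rank ≤ Fintype.card κ)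
    (hκ : Fintype.card κ ≤ Fintype.card ι) :
    ∃ P : Matrix ι κ ℝ, Pᵀ * P = 1 ∧ P * Pᵀ * B = B := by
  let V : Submodule ℝ (EuclideanSpace ℝ ι) :=
    (LinearMap.range B.mulVecLin).map (EuclideanSpace.equiv ι ℝ).symm.toLinearEquiv.toLinearMap
  obtain ⟨v, hv, hsum⟩ := V.exists_orthonormal_sum_inner_smul_eq
    (by rwa [LinearEquiv.finrank_map_eq]) (by simpa using hκ)
  refine ⟨of fun i j => v j i, ?_, ?_⟩
  · ext j j'
    simpa [mul_apply, one_apply, PiLp.inner_apply, mul_comm] using orthonormal_iff_ite.mp hv j j'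
  · rw [ext_iff_mulVec]
    intro w
    have := hsum (WithLp.toLp 2 (B *ᵥ w)) ⟨B *ᵥ w, ⟨w, rfl⟩, rfl⟩
    rw [← mulVec_mulVec, ← mulVec_mulVec]
    ext i
    simpa [mulVec, dotProduct, PiLp.inner_apply, Finset.sum_apply, Finset.mul_sum, mul_comm,
      mul_left_comm] using congrArg (· i) this

section Frobenius

variable {ι κ ρ μ : Type*} [Fintype ι] [Fintype κ] [Fintype ρ] [Fintype μ]

theorem frobenius_norm_sq_eq_sum (A : Matrix ι μ ℝ) : ‖A‖ ^ 2 = ∑ i, ∑ j, A i j ^ 2 := by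
  rw [frobenius_norm_def, ← Real.rpow_natCast, ← Real.rpow_mul (by positivity)]
  norm_num

theorem frobenius_norm_sq_eq_trace (A : Matrix ι μ ℝ) : ‖A‖ ^ 2 = (Aᵀ * A).trace := by
  rw [frobenius_norm_sq_eq_sum]
  simp only [trace, diag, mul_apply, transpose_apply, sq]
  exact Finset.sum_comm

theorem frobNorm_eq_norm {p q : ℕ} (A : Matrix (Fin p) (Fin q) ℝ) : frobNorm A = ‖A‖ := by
  rw [frobNorm, ← frobenius_norm_sq_eq_sum, Real.sqrt_sq (norm_nonneg A)]

theorem frobenius_norm_sub_smul_sq (U V : Matrix ι μ ℝ) (t : ℝ) :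
    ‖U - t • V‖ ^ 2 = ‖U‖ ^ 2 - 2 * t * (Uᵀ * V).trace + t ^ 2 * ‖V‖ ^ 2 := by
  simp only [frobenius_norm_sq_eq_trace, transpose_sub, transpose_smul, Matrix.sub_mul,
    Matrix.mul_sub, Matrix.smul_mul, Matrix.mul_smul, trace_sub, trace_smul, smul_eq_mul]
  rw [← trace_transpose (Vᵀ * U), transpose_mul, transpose_transpose]
  ring

theorem trace_transpose_mul_eq_zero_of_forall_norm_le {U V : Matrix ι μ ℝ}
    (h : ∀ t : ℝ, ‖U‖ ≤ ‖U - t • V‖) : (Uᵀ * V).trace = 0 := by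
  set c := (Uᵀ * V).trace
  have key := h (c / (‖V‖ ^ 2 + 1))
  rw [← pow_le_pow_iff_left₀ (norm_nonneg _) (norm_nonneg _) two_ne_zero,
    frobenius_norm_sub_smul_sq] at key
  have hd : 0 < ‖V‖ ^ 2 + 1 := by positivity
  field_simp at key
  nlinarith [sq_nonneg c, sq_nonneg ‖V‖]

theorem eq_zero_of_forall_trace_mul_eq_zero {G : Matrix ι μ ℝ}
    (h : ∀ H : Matrix μ ι ℝ, (G * H).trace = 0) : G = 0 := by
  have hG : (Gᵀᴴ * Gᵀ).trace = 0 := by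
    rw [conjTranspose_eq_transpose_of_trivial, transpose_transpose]
    exact h Gᵀ
  simpa using trace_conjTranspose_mul_self_eq_zero_iff.mp hG

theorem mul_transpose_sub_mul_eq_zero_of_forall_norm_le {P : Matrix ι κ ℝ} {W : Matrix κ ρ ℝ}
    {X : Matrix ρ μ ℝ} {Y : Matrix ι μ ℝ}
    (h : ∀ W' : Matrix κ ρ ℝ, ‖Y - P * (W * X)‖ ≤ ‖Y - P * (W' * X)‖) :
    X * (Y - P * (W * X))ᵀ * P = 0 := by
  refine eq_zero_of_forall_trace_mul_eq_zero fun H => ?_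
  have hres : ((Y - P * (W * X))ᵀ * (P * (H * X))).trace = 0 :=
    trace_transpose_mul_eq_zero_of_forall_norm_le fun t => by
      simpa [Matrix.add_mul, Matrix.mul_add, sub_sub] using h (W + t • H)
  rw [← hres, Matrix.mul_assoc X, Matrix.mul_assoc X, trace_mul_comm]
  simp only [Matrix.mul_assoc]

end Frobenius

def stiefel (ν κ : Type*) [Fintype ν] [DecidableEq κ] : Set (Matrix ν κ ℝ) :=
  {P | Pᵀ * P = 1}

section Stiefel

variable {ν κ ρ μ : Type*} [Fintype ν] [Fintype κ] [DecidableEq κ] [Fintype ρ] [Fintype μ]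

theorem norm_mul_of_mem_stiefel {P : Matrix ν κ ℝ} (hP : P ∈ stiefel ν κ) (Z : Matrix κ μ ℝ) :
    ‖P * Z‖ = ‖Z‖ := by
  have hP : Pᵀ * P = 1 := hP
  rw [← sq_eq_sq₀ (norm_nonneg _) (norm_nonneg _), frobenius_norm_sq_eq_trace,
    frobenius_norm_sq_eq_trace, transpose_mul, Matrix.mul_assoc, ← Matrix.mul_assoc Pᵀ, hP,
    Matrix.one_mul]

theorem isCompact_stiefel : IsCompact (stiefel ν κ) := by
  refine Metric.isCompact_of_isClosed_isBounded
    (isClosed_eq (continuous_id.matrix_transpose.matrix_mul continuous_id) continuous_const) ?_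
  refine (Metric.isBounded_closedBall (x := 0) (r := √(Fintype.card κ))).subset fun P hP => ?_
  have hP : Pᵀ * P = 1 := hP
  rw [mem_closedBall_zero_iff, Real.le_sqrt (norm_nonneg _) (Nat.cast_nonneg _),
    frobenius_norm_sq_eq_trace, hP, trace_one]

theorem stiefel_nonempty (hκ : Fintype.card κ ≤ Fintype.card ν) : (stiefel ν κ).Nonempty :=
  let ⟨P, hP, _⟩ := exists_orthonormal_cols_of_rank_le (0 : Matrix ν ν ℝ) (by simp) hκ
  ⟨P, hP⟩

theorem exists_forall_norm_sub_stiefel_mul_le (hκ : Fintype.card κ ≤ Fintype.card ν)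
    (X : Matrix ρ μ ℝ) (Y : Matrix ν μ ℝ) :
    ∃ P ∈ stiefel ν κ, ∃ W : Matrix κ ρ ℝ, ∀ P' ∈ stiefel ν κ, ∀ W' : Matrix κ ρ ℝ,
      ‖Y - P * (W * X)‖ ≤ ‖Y - P' * (W' * X)‖ := by
  let S := LinearMap.range (mulRightLinearMap κ ℝ X)
  let K := stiefel ν κ ×ˢ ((S : Set (Matrix κ μ ℝ)) ∩ Metric.closedBall 0 (2 * ‖Y‖))
  have hK : IsCompact K :=
    isCompact_stiefel.prod ((isCompact_closedBall _ _).inter_left S.closed_of_finiteDimensional)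
  obtain ⟨P₀, hP₀⟩ := stiefel_nonempty hκ
  have h₀ : (P₀, 0) ∈ K := ⟨hP₀, S.zero_mem, by simp⟩
  obtain ⟨⟨P, Z⟩, ⟨hP, ⟨W, rfl⟩, -⟩, hmin⟩ := hK.exists_isMinOn ⟨_, h₀⟩
    (continuous_const.sub (continuous_fst.matrix_mul continuous_snd)).norm.continuousOn
  replace hmin := isMinOn_iff.mp hmin
  refine ⟨P, hP, W, fun P' hP' W' => ?_⟩
  by_cases hW' : ‖W' * X‖ ≤ 2 * ‖Y‖
  · exact hmin (P', W' * X)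
      ⟨hP', LinearMap.mem_range_self _ W', mem_closedBall_zero_iff.mpr hW'⟩
  · -- outside the ball every candidate does worse than `P₀ * 0`
    calc ‖Y - P * (W * X)‖ ≤ ‖Y‖ := by simpa using hmin _ h₀
      _ ≤ ‖P' * (W' * X)‖ - ‖Y‖ := by rw [norm_mul_of_mem_stiefel hP']; linarith
      _ ≤ ‖Y - P' * (W' * X)‖ := by simpa [norm_sub_rev] using norm_sub_norm_le (P' * (W' * X)) Y

end Stiefel

theorem stmt_10_general (n m k : ℕ) (hkm : k ≤ m) (hmn : m ≤ n)
    (X Y : Matrix (Fin n) (Fin m) ℝ) :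
    ∃ P Q : Matrix (Fin n) (Fin k) ℝ,
      Pᵀ * P = 1 ∧
      X * Yᵀ * P = X * Xᵀ * Q ∧
      ∀ A : Matrix (Fin n) (Fin n) ℝ, A.rank ≤ k →
        frobNorm (Y - P * Qᵀ * X) ≤ frobNorm (Y - A * X) := by
  have hkn : Fintype.card (Fin k) ≤ Fintype.card (Fin n) := by simpa using hkm.trans hmn
  obtain ⟨P, hP, W, hmin⟩ := exists_forall_norm_sub_stiefel_mul_le hkn X Y
  refine ⟨P, Wᵀ, hP, ?_, fun A hA => ?_⟩
  · have hnormal := mul_transpose_sub_mul_eq_zero_of_forall_norm_le (hmin P hP)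
    have hP : Pᵀ * P = 1 := hP
    rw [transpose_sub, Matrix.mul_sub, Matrix.sub_mul, sub_eq_zero] at hnormal
    simpa [Matrix.mul_assoc, hP] using hnormal
  · obtain ⟨P', hP', hA'⟩ := exists_orthonormal_cols_of_rank_le A (by simpa using hA) hkn
    rw [frobNorm_eq_norm, frobNorm_eq_norm, transpose_transpose, Matrix.mul_assoc]
    simpa [← Matrix.mul_assoc, hA'] using hmin P' hP' (P'ᵀ * A)

/-- Lemma B.1: the rank-constrained problem admits a minimiser of the form `P Qᵀ` with
`Pᵀ P = I_k` and `X Yᵀ P = X Xᵀ Q`. -/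
theorem stmt_10 (n m k : ℕ) (hk : 0 < k) (hkm : k ≤ m) (hmn : m ≤ n)
    (X Y : Matrix (Fin n) (Fin m) ℝ) :
    ∃ P Q : Matrix (Fin n) (Fin k) ℝ,
      Pᵀ * P = 1 ∧
      X * Yᵀ * P = X * Xᵀ * Q ∧
      ∀ A : Matrix (Fin n) (Fin n) ℝ, A.rank ≤ k →
        frobNorm (Y - P * Qᵀ * X) ≤ frobNorm (Y - A * X) :=
  stmt_10_general n m k hkm hmn X Y
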